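/- Let $G$ be an edge-transitive finite simple graph without isolated vertices or isolated edges, and let $e'$ be any edge of $G$. Then $p_G(x) = p_{G - e'}(x)$. -/

import Mathlib

open Finset

noncomputable section
open scoped Classical

namespace ForestBuilding

variable {V : Type*} [Fintype V]

/-- A uniformly random ordering of the edges of `G` is a bijection from the
edges of `G` to initial segment positions. -/
abbrev EdgeOrdering (G : SimpleGraph V) : Type _ :=
  ↥G.edgeFinset ≃ Fin G.edgeFinset.card

/-- Two edges (as unordered pairs) share a vertex. -/
def SharesVertex {V : Type*} (e f : Sym2 V) : Prop := ∃ v, v ∈ e ∧ v ∈ f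

/-- The number of connected components of the spanning forest produced by the
forest building process run with the edge ordering `π`:  an edge starts a new
component iff it precedes every other edge sharing one of its vertices, and the
number of components (ignoring isolated vertices) is the number of such edges. -/
def numComponents (G : SimpleGraph V) (π : EdgeOrdering G) : ℕ :=
  (univ.filter fun e : ↥G.edgeFinset =>
    ∀ f : ↥G.edgeFinset, f ≠ e → SharesVertex (e : Sym2 V) (f : Sym2 V) → π e < π f).card

/-- `P G k` is the probability that the forest building process on `G`, run with
a uniformly random edge ordering, produces a spanning forest with `k` components. -/
def P (G : SimpleGraph V) (k : ℕ) : ℚ :=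
  ((univ.filter fun π : EdgeOrdering G => numComponents G π = k).card : ℚ) /
    (Fintype.card (EdgeOrdering G))

/-- The expected number of components of the forest building process on `G`. -/
def expComponents (G : SimpleGraph V) : ℚ :=
  (∑ π : EdgeOrdering G, (numComponents G π : ℚ)) / (Fintype.card (EdgeOrdering G))

/-- The component generating function `p_G(x) = ∑ₖ P(G,k) xᵏ`, evaluated at `x`.
Isolated vertices contribute nothing, matching the convention `p_{K₁}(x) = 1`. -/
def pPoly (G : SimpleGraph V) (x : ℚ) : ℚ :=
  (∑ π : EdgeOrdering G, x ^ numComponents G π) / (Fintype.card (EdgeOrdering G))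

/-- The sum of the degrees of the two endpoints of an edge. -/
def degSum (G : SimpleGraph V) (e : Sym2 V) : ℕ :=
  Sym2.lift ⟨fun u v => G.degree u + G.degree v, fun _ _ => Nat.add_comm _ _⟩ e

/-!
Read off the last edge `e` of a uniformly random ordering of the edges of `G`: it is uniformly
distributed, and given `e` the remaining edges are in uniformly random order. As `G` has no
isolated edge, `e` has a neighbouring edge placed before it, so `e` never starts a component,
and coming last it does not prevent any other edge from starting one. Hence
`m · p_G = ∑ₑ p_{G - e}` for the number `m` of edges, and by edge-transitivity all the graphs
`G - e` are isomorphic to `G - e'`.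
-/

open SimpleGraph

def StartsComponent (G : SimpleGraph V) (π : EdgeOrdering G) (e : G.edgeFinset) : Prop :=
  ∀ f : G.edgeFinset, f ≠ e → SharesVertex (e : Sym2 V) (f : Sym2 V) → π e < π f

lemma numComponents_eq_card (G : SimpleGraph V) (π : EdgeOrdering G) :
    numComponents G π = #(univ.filter (StartsComponent G π)) := by
  rw [numComponents]
  congr

lemma card_edgeOrdering (G : SimpleGraph V) :
    Fintype.card (EdgeOrdering G) = (#G.edgeFinset).factorial := by
  rw [Fintype.card_equiv G.edgeFinset.equivFin, Fintype.card_coe]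

section Isomorphism

variable {W : Type*} [Fintype W]

omit [Fintype V] [Fintype W] in
lemma sharesVertex_map_iff {φ : V → W} (hφ : φ.Injective) {e f : Sym2 V} :
    SharesVertex (Sym2.map φ e) (Sym2.map φ f) ↔ SharesVertex e f := by
  simp only [SharesVertex, Sym2.mem_map]
  constructor
  · rintro ⟨_, ⟨a, ha, rfl⟩, b, hb, hba⟩
    exact ⟨a, ha, hφ hba ▸ hb⟩
  · rintro ⟨v, he, hf⟩
    exact ⟨φ v, ⟨v, he, rfl⟩, v, hf, rfl⟩

lemma numComponents_eq_of_equiv {G : SimpleGraph V} {G' : SimpleGraph W}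
    (ε : G.edgeFinset ≃ G'.edgeFinset)
    (hshare : ∀ a b, SharesVertex (ε a : Sym2 W) (ε b) ↔ SharesVertex (a : Sym2 V) b)
    (π : EdgeOrdering G) (π' : EdgeOrdering G')
    (hlt : ∀ a b, π' (ε a) < π' (ε b) ↔ π a < π b) :
    numComponents G π = numComponents G' π' := by
  refine card_equiv ε fun a => ?_
  simp only [mem_filter, mem_univ, true_and]
  refine ε.forall_congr fun f => ?_
  rw [ε.injective.ne_iff, hshare, hlt]

def edgeFinsetEquiv {G : SimpleGraph V} {G' : SimpleGraph W} (φ : G ≃g G') :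
    G.edgeFinset ≃ G'.edgeFinset :=
  (Equiv.subtypeEquivRight fun _ => mem_edgeFinset).trans <|
    φ.mapEdgeSet.trans (Equiv.subtypeEquivRight fun _ => mem_edgeFinset).symm

@[simp] lemma coe_edgeFinsetEquiv {G : SimpleGraph V} {G' : SimpleGraph W} (φ : G ≃g G')
    (e : G.edgeFinset) : (edgeFinsetEquiv φ e : Sym2 W) = Sym2.map φ e := rfl

lemma pPoly_congr {G : SimpleGraph V} {G' : SimpleGraph W} (φ : G ≃g G') :
    pPoly G = pPoly G' := by
  let ε := edgeFinsetEquiv φ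
  let σ : EdgeOrdering G ≃ EdgeOrdering G' :=
    ε.equivCongr (finCongr (φ.card_edgeFinset_eq))
  funext x
  rw [pPoly, pPoly, Fintype.card_congr σ]
  congr 1
  refine Fintype.sum_equiv σ _ _ fun π => ?_
  rw [numComponents_eq_of_equiv ε (fun a b => ?_) π (σ π) fun a b => ?_]
  · exact sharesVertex_map_iff φ.injective
  · simp [σ]

end Isomorphism

-- `pPoly` uses classical decidability of adjacency, so `G.deleteEdges s` must not use its own.
attribute [-instance] instDecidableRelAdjDeleteEdgesOfDecidablePredSym2MemSetOfDecidableEq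

section DeleteEdge

variable (G : SimpleGraph V) (e : G.edgeFinset)

omit [Fintype V] in
lemma mem_edgeSet_deleteEdges_singleton_iff {s t : Sym2 V} :
    s ∈ (G.deleteEdges {t}).edgeSet ↔ s ∈ G.edgeSet ∧ s ≠ t := by
  rw [edgeSet_deleteEdges, Set.mem_sdiff, Set.mem_singleton_iff]

def deleteEdgeEquiv :
    (G.deleteEdges {(e : Sym2 V)}).edgeFinset ≃ {f : G.edgeFinset // f ≠ e} where
  toFun f :=
    have hf := (mem_edgeSet_deleteEdges_singleton_iff G).1 (mem_edgeFinset.1 f.2)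
    ⟨⟨f, mem_edgeFinset.2 hf.1⟩, fun h => hf.2 (congrArg Subtype.val h)⟩
  invFun f := ⟨f.1, mem_edgeFinset.2 <| (mem_edgeSet_deleteEdges_singleton_iff G).2
    ⟨mem_edgeFinset.1 f.1.2, fun h => f.2 (Subtype.ext h)⟩⟩

def optionEdgeEquiv : Option (G.deleteEdges {(e : Sym2 V)}).edgeFinset ≃ G.edgeFinset :=
  (deleteEdgeEquiv G e).optionCongr.trans (Equiv.optionSubtypeNe e)

@[simp] lemma optionEdgeEquiv_none : optionEdgeEquiv G e none = e := rfl

@[simp] lemma optionEdgeEquiv_symm_self : (optionEdgeEquiv G e).symm e = none :=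
  (Equiv.symm_apply_eq _).2 rfl

@[simp] lemma coe_optionEdgeEquiv_some (f : (G.deleteEdges {(e : Sym2 V)}).edgeFinset) :
    (optionEdgeEquiv G e (some f) : Sym2 V) = f := rfl

lemma card_edgeFinset_deleteEdges_add_one :
    #(G.deleteEdges {(e : Sym2 V)}).edgeFinset + 1 = #G.edgeFinset := by
  rw [← Fintype.card_coe, ← Fintype.card_coe, ← Fintype.card_option]
  exact Fintype.card_congr (optionEdgeEquiv G e)

def extendLast (π : EdgeOrdering (G.deleteEdges {(e : Sym2 V)})) : EdgeOrdering G :=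
  (optionEdgeEquiv G e).symm.trans <| π.optionCongr.trans <|
    finSuccEquivLast.symm.trans (finCongr (card_edgeFinset_deleteEdges_add_one G e))

variable {G e} (π : EdgeOrdering (G.deleteEdges {(e : Sym2 V)}))

@[simp] lemma val_extendLast_self :
    (extendLast G e π e : ℕ) = #(G.deleteEdges {(e : Sym2 V)}).edgeFinset := by
  simp [extendLast]

@[simp] lemma val_extendLast_some (f : (G.deleteEdges {(e : Sym2 V)}).edgeFinset) :
    (extendLast G e π (optionEdgeEquiv G e (some f)) : ℕ) = π f := by
  simp [extendLast]

lemma extendLast_lt_self {g : G.edgeFinset} (hg : g ≠ e) :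
    extendLast G e π g < extendLast G e π e := by
  obtain ⟨_ | f, rfl⟩ := (optionEdgeEquiv G e).surjective g
  · exact absurd rfl hg
  · simp [Fin.lt_def]

lemma startsComponent_extendLast_some_iff (f : (G.deleteEdges {(e : Sym2 V)}).edgeFinset) :
    StartsComponent G (extendLast G e π) (optionEdgeEquiv G e (some f)) ↔
      StartsComponent (G.deleteEdges {(e : Sym2 V)}) π f := by
  have hf : optionEdgeEquiv G e (some f) ≠ e :=
    (optionEdgeEquiv G e).injective.ne (Option.some_ne_none f)
  simp only [StartsComponent]
  rw [← (optionEdgeEquiv G e).forall_congr_right, Option.forall, optionEdgeEquiv_none]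
  simp only [extendLast_lt_self π hf, implies_true, true_and,
    (optionEdgeEquiv G e).injective.ne_iff, ne_eq, Option.some.injEq, Fin.lt_def,
    val_extendLast_some, coe_optionEdgeEquiv_some]

lemma numComponents_extendLast (he : ∃ g ≠ e, SharesVertex (e : Sym2 V) (g : Sym2 V)) :
    numComponents G (extendLast G e π) = numComponents (G.deleteEdges {(e : Sym2 V)}) π := by
  have hlast : ¬ StartsComponent G (extendLast G e π) e := fun h =>
    let ⟨g, hg, hsh⟩ := he
    (h g hg hsh).not_gt (extendLast_lt_self π hg)
  rw [numComponents_eq_card, numComponents_eq_card, card_filter, card_filter,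
    ← (optionEdgeEquiv G e).sum_comp, Fintype.sum_option]
  simp [hlast, startsComponent_extendLast_some_iff]

end DeleteEdge

lemma extendLast_injective (G : SimpleGraph V) :
    Function.Injective fun p : Σ e : G.edgeFinset, EdgeOrdering (G.deleteEdges {(e : Sym2 V)}) =>
      extendLast G p.1 p.2 := by
  rintro ⟨e₁, π₁⟩ ⟨e₂, π₂⟩ h
  simp only at h
  obtain rfl : e₁ = e₂ := by
    by_contra hne
    have h₁ := extendLast_lt_self π₁ (Ne.symm hne)
    have h₂ := extendLast_lt_self π₂ hne
    rw [← h] at h₂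
    exact h₁.not_gt h₂
  obtain rfl : π₁ = π₂ := Equiv.ext fun f => Fin.ext <| by
    simpa using congrArg Fin.val (DFunLike.congr_fun h (optionEdgeEquiv G e₁ (some f)))
  rfl

/-- Every ordering of the edges arises from exactly one pair `(e, π)`, `π` an ordering of
`G - e`, by appending `e`. -/
lemma sum_edgeOrdering_eq_sum_deleteEdges (G : SimpleGraph V) (hG : G.edgeFinset.Nonempty)
    (F : EdgeOrdering G → ℚ) :
    ∑ π, F π = ∑ e : G.edgeFinset, ∑ π : EdgeOrdering (G.deleteEdges {(e : Sym2 V)}),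
      F (extendLast G e π) := by
  have hcard : Fintype.card (Σ e : G.edgeFinset, EdgeOrdering (G.deleteEdges {(e : Sym2 V)})) =
      Fintype.card (EdgeOrdering G) := by
    have hdel (e : G.edgeFinset) :
        #(G.deleteEdges {(e : Sym2 V)}).edgeFinset = #G.edgeFinset - 1 := by
      have := card_edgeFinset_deleteEdges_add_one G e
      omega
    simp only [Fintype.card_sigma, card_edgeOrdering, hdel, sum_const, card_univ,
      Fintype.card_coe, smul_eq_mul]
    exact Nat.mul_factorial_pred hG.card_pos.ne'
  rw [← Fintype.sum_sigma' fun e π => F (extendLast G e π)]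
  exact (Fintype.sum_bijective _ ((Fintype.bijective_iff_injective_and_card _).2
    ⟨extendLast_injective G, hcard⟩) _ _ fun _ => rfl).symm

lemma card_mul_pPoly_eq_sum_pPoly_deleteEdges (G : SimpleGraph V)
    (hG : ∀ e : G.edgeFinset, ∃ g ≠ e, SharesVertex (e : Sym2 V) (g : Sym2 V)) (x : ℚ) :
    #G.edgeFinset * pPoly G x = ∑ e : G.edgeFinset, pPoly (G.deleteEdges {(e : Sym2 V)}) x := by
  obtain hempty | hne := G.edgeFinset.eq_empty_or_nonempty
  · have := Finset.isEmpty_coe_sort.2 hempty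
    simp [hempty]
  simp only [pPoly, sum_edgeOrdering_eq_sum_deleteEdges G hne, card_edgeOrdering, sum_div, mul_sum]
  refine sum_congr rfl fun e _ => ?_
  rw [← card_edgeFinset_deleteEdges_add_one G e]
  simp only [numComponents_extendLast _ (hG e), Nat.factorial_succ]
  push_cast
  field_simp

lemma exists_ne_sharesVertex_of_two_le_degree (G : SimpleGraph V) {u v : V} (huv : G.Adj u v)
    (hu : 2 ≤ G.degree u) :
    ∃ g : G.edgeFinset, (g : Sym2 V) ≠ s(u, v) ∧ SharesVertex s(u, v) (g : Sym2 V) := by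
  obtain ⟨w, hw, hwv⟩ := exists_mem_ne (s := G.neighborFinset u)
    (by rwa [card_neighborFinset_eq_degree]) v
  exact ⟨⟨s(u, w), by simpa using hw⟩, by simp [hwv, huv.ne], u, by simp, by simp⟩

lemma exists_ne_sharesVertex (G : SimpleGraph V)
    (hG : ∀ u v : V, G.Adj u v → 2 ≤ G.degree u ∨ 2 ≤ G.degree v) (e : G.edgeFinset) :
    ∃ g ≠ e, SharesVertex (e : Sym2 V) (g : Sym2 V) := by
  obtain ⟨e, he⟩ := e
  induction e using Sym2.ind with | _ u v => ?_
  have huv : G.Adj u v := by simpa using he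
  obtain ⟨g, hne, hsh⟩ := (hG u v huv).elim (exists_ne_sharesVertex_of_two_le_degree G huv)
    fun hv => Sym2.eq_swap (a := v) ▸ exists_ne_sharesVertex_of_two_le_degree G huv.symm hv
  exact ⟨g, fun h => hne (by rw [h]), hsh⟩

omit [Fintype V] in
def _root_.SimpleGraph.Iso.deleteEdgesSingleton {W : Type*} {G : SimpleGraph V}
    {G' : SimpleGraph W} (φ : G ≃g G') {e : Sym2 V} {e' : Sym2 W} (h : Sym2.map φ e = e') :
    G.deleteEdges {e} ≃g G'.deleteEdges {e'} where
  toEquiv := φ.toEquiv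
  map_rel_iff' {u v} := by
    simp only [deleteEdges_adj, Set.mem_singleton_iff, ← h]
    rw [← Sym2.map_mk]
    exact and_congr φ.map_adj_iff (Sym2.map.injective φ.injective).eq_iff.not

theorem pPoly_edge_transitive_general (G : SimpleGraph V)
    (htrans : ∀ e₁ ∈ G.edgeSet, ∀ e₂ ∈ G.edgeSet,
      ∃ φ : G ≃g G, Sym2.map φ e₁ = e₂)
    (hedge : ∀ u v : V, G.Adj u v → 2 ≤ G.degree u ∨ 2 ≤ G.degree v)
    (e' : Sym2 V) (he' : e' ∈ G.edgeSet) :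
    ∀ x : ℚ, pPoly G x = pPoly (G.deleteEdges {e'}) x := by
  intro x
  have hm : (#G.edgeFinset : ℚ) ≠ 0 := by
    exact_mod_cast (card_pos.2 ⟨e', mem_edgeFinset.2 he'⟩).ne'
  have hsame (e : G.edgeFinset) :
      pPoly (G.deleteEdges {(e : Sym2 V)}) x = pPoly (G.deleteEdges {e'}) x := by
    obtain ⟨φ, hφ⟩ := htrans e (mem_edgeFinset.1 e.2) e' he'
    rw [pPoly_congr (φ.deleteEdgesSingleton hφ)]
  have hrec := card_mul_pPoly_eq_sum_pPoly_deleteEdges G (exists_ne_sharesVertex G hedge) x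
  rw [sum_congr rfl fun e _ => hsame e, sum_const, card_univ, Fintype.card_coe,
    nsmul_eq_mul] at hrec
  exact mul_left_cancel₀ hm hrec

/-- **Edge-transitive graphs** (Corollary of the recurrence):  if `G` is
edge-transitive (any edge can be mapped to any other edge by an automorphism),
has no isolated vertices and no isolated edges, and `e'` is an edge of `G`,
then `p_G(x) = p_{G - e'}(x)`. -/
theorem pPoly_edge_transitive (G : SimpleGraph V)
    (htrans : ∀ e₁ ∈ G.edgeSet, ∀ e₂ ∈ G.edgeSet,
      ∃ φ : G ≃g G, Sym2.map φ e₁ = e₂)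
    (hiso : ∀ v : V, 0 < G.degree v)
    (hedge : ∀ u v : V, G.Adj u v → 2 ≤ G.degree u ∨ 2 ≤ G.degree v)
    (e' : Sym2 V) (he' : e' ∈ G.edgeSet) :
    ∀ x : ℚ, pPoly G x = pPoly (G.deleteEdges {e'}) x :=
  pPoly_edge_transitive_general G htrans hedge e' he'

end ForestBuilding
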